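/- Let f : [0,T] × ℝ^d → ℝ^d be continuous with one-sided Lipschitz constant L > 0, satisfy |f(t,x)| ≤ L(1+|x|)^q and the local Lipschitz bound |f(t,x₁)-f(t,x₂)| ≤ L(1+|x₁|+|x₂|)^{q-1}|x₁-x₂| with q ≥ 2. Let h̄ ∈ (0,1/L), δ ∈ (0,h̄], F_δ(t,x) = x - δf(t,x). Then there exists a constant C₃ depending only on L, h̄, q such that |F_δ^{-1}(t,x) - x - δf(t,x)| ≤ δ² C₃ (1 + |x|^{2q-1}) for all x ∈ ℝ^d, t ∈ [0,T]. -/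

import Mathlib

/-!
Write `y = F_δ⁻¹(t, x)`, so that `y = x + δ f(t, y)` and the error is
`F_δ⁻¹(t, x) - x - δ f(t, x) = δ (f(t, y) - f(t, x))`.
Testing `y = x + δ f(t, y)` against `y` and using the one-sided Lipschitz bound between `y` and `0`
gives `(1 - δL)|y| ≤ |x| + δL`, so `|y| ≤ (1 - h̄L)⁻¹ (1 + |x|)`. Hence `|y - x| = δ|f(t, y)|` is
`O(δ (1 + |x|)^q)`, and the local Lipschitz bound turns this into `O(δ² (1 + |x|)^(2q-1))`.
-/

open scoped RealInnerProductSpace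

lemma one_add_rpow_le {a p : ℝ} (ha : 0 ≤ a) (hp : 1 ≤ p) :
    (1 + a) ^ p ≤ 2 ^ (p - 1) * (1 + a ^ p) := by
  have h := NNReal.rpow_add_le_mul_rpow_add_rpow 1 a.toNNReal hp
  rw [← NNReal.coe_le_coe] at h
  push_cast [Real.coe_toNNReal _ ha] at h
  simpa using h

section ImplicitStep

variable {E : Type*} [NormedAddCommGroup E] [InnerProductSpace ℝ E] {g : E → E} {x y : E}
  {L δ : ℝ}

lemma one_sub_mul_norm_le_of_sub_smul_eq (hδ : 0 ≤ δ) (hone : ⟪g y - g 0, y⟫ ≤ L * ‖y‖ ^ 2)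
    (hxy : y - δ • g y = x) :
    (1 - δ * L) * ‖y‖ ≤ ‖x‖ + δ * ‖g 0‖ := by
  have hsq : ‖y‖ ^ 2 = ⟪x, y⟫ + δ * ⟪g y, y⟫ := by
    rw [← hxy, inner_sub_left, real_inner_smul_left, real_inner_self_eq_norm_sq]; ring
  have hx : ⟪x, y⟫ ≤ ‖x‖ * ‖y‖ := real_inner_le_norm x y
  have hg0 : ⟪g 0, y⟫ ≤ ‖g 0‖ * ‖y‖ := real_inner_le_norm _ _
  have hgy : ⟪g y, y⟫ ≤ L * ‖y‖ ^ 2 + ‖g 0‖ * ‖y‖ := by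
    rw [inner_sub_left] at hone; linarith
  have hmul : (1 - δ * L) * ‖y‖ * ‖y‖ ≤ (‖x‖ + δ * ‖g 0‖) * ‖y‖ := by
    nlinarith [mul_le_mul_of_nonneg_left hgy hδ]
  rcases (norm_nonneg y).eq_or_lt with hy | hy
  · rw [← hy, mul_zero]; positivity
  · exact le_of_mul_le_mul_right hmul hy

lemma norm_le_inv_one_sub_mul_one_add_norm {κ : ℝ} (hδ : 0 ≤ δ)
    (hone : ⟪g y - g 0, y⟫ ≤ L * ‖y‖ ^ 2) (hg0 : ‖g 0‖ ≤ L) (hδL : δ * L ≤ κ) (hκ : κ < 1)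
    (hxy : y - δ • g y = x) :
    ‖y‖ ≤ (1 - κ)⁻¹ * (1 + ‖x‖) := by
  have h := one_sub_mul_norm_le_of_sub_smul_eq hδ hone hxy
  rw [inv_mul_eq_div, le_div_iff₀ (by linarith)]
  nlinarith [norm_nonneg y, mul_le_mul_of_nonneg_left hg0 hδ]

variable {q K : ℝ}

lemma norm_sub_le_of_sub_smul_eq (hδ : 0 ≤ δ) (hL : 0 ≤ L) (hq : 0 ≤ q) (hK : 0 ≤ K)
    (hgrowth : ‖g y‖ ≤ L * (1 + ‖y‖) ^ q) (hy : ‖y‖ ≤ K * (1 + ‖x‖))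
    (hxy : y - δ • g y = x) :
    ‖y - x‖ ≤ δ * (L * (1 + K) ^ q * (1 + ‖x‖) ^ q) := by
  have hyx : y - x = δ • g y := by rw [← hxy, sub_sub_cancel]
  have hbase : (1 + ‖y‖) ^ q ≤ (1 + K) ^ q * (1 + ‖x‖) ^ q := by
    rw [← Real.mul_rpow (by positivity) (by positivity)]
    exact Real.rpow_le_rpow (by positivity) (by nlinarith [norm_nonneg x]) hq
  rw [hyx, norm_smul, Real.norm_of_nonneg hδ]
  gcongr
  calc ‖g y‖ ≤ L * (1 + ‖y‖) ^ q := hgrowth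
    _ ≤ L * ((1 + K) ^ q * (1 + ‖x‖) ^ q) := by gcongr
    _ = _ := by ring

lemma norm_sub_sub_smul_le_of_sub_smul_eq (hδ : 0 ≤ δ) (hL : 0 ≤ L) (hq : 1 ≤ q) (hK : 0 ≤ K)
    (hgrowth : ‖g y‖ ≤ L * (1 + ‖y‖) ^ q)
    (hlip : ‖g y - g x‖ ≤ L * (1 + ‖y‖ + ‖x‖) ^ (q - 1) * ‖y - x‖)
    (hy : ‖y‖ ≤ K * (1 + ‖x‖)) (hxy : y - δ • g y = x) :
    ‖y - x - δ • g x‖ ≤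
      δ ^ 2 * (L ^ 2 * (2 + K) ^ (q - 1) * (1 + K) ^ q) * (1 + ‖x‖) ^ (2 * q - 1) := by
  have hstep : y - x - δ • g x = δ • (g y - g x) := by rw [smul_sub, ← hxy]; abel
  have hbase : (1 + ‖y‖ + ‖x‖) ^ (q - 1) ≤ (2 + K) ^ (q - 1) * (1 + ‖x‖) ^ (q - 1) := by
    rw [← Real.mul_rpow (by positivity) (by positivity)]
    exact Real.rpow_le_rpow (by positivity) (by nlinarith [norm_nonneg x]) (by linarith)
  have hfirst := norm_sub_le_of_sub_smul_eq hδ hL (by linarith) hK hgrowth hy hxy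
  have hpow : (1 + ‖x‖) ^ (q - 1) * (1 + ‖x‖) ^ q = (1 + ‖x‖) ^ (2 * q - 1) := by
    rw [← Real.rpow_add (by positivity)]; ring_nf
  rw [hstep, norm_smul, Real.norm_of_nonneg hδ, ← hpow]
  calc δ * ‖g y - g x‖
      ≤ δ * (L * ((2 + K) ^ (q - 1) * (1 + ‖x‖) ^ (q - 1)) *
          (δ * (L * (1 + K) ^ q * (1 + ‖x‖) ^ q))) := by
        gcongr; exact hlip.trans (by gcongr)
    _ = _ := by ring

end ImplicitStep

theorem Finv_second_order_general {d : ℕ} (T L q hbar δ : ℝ) (hL : 0 < L) (hq : 2 ≤ q)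
    (hhbar1 : hbar < 1 / L) (hδ : 0 < δ) (hδbar : δ ≤ hbar)
    (f : ℝ → EuclideanSpace ℝ (Fin d) → EuclideanSpace ℝ (Fin d))
    (hone : ∀ t ∈ Set.Icc (0 : ℝ) T, ∀ x₁ x₂,
      ⟪f t x₁ - f t x₂, x₁ - x₂⟫ ≤ L * ‖x₁ - x₂‖ ^ 2)
    (hgrowth : ∀ t ∈ Set.Icc (0 : ℝ) T, ∀ x, ‖f t x‖ ≤ L * (1 + ‖x‖) ^ q)
    (hlip : ∀ t ∈ Set.Icc (0 : ℝ) T, ∀ x₁ x₂,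
      ‖f t x₁ - f t x₂‖ ≤ L * (1 + ‖x₁‖ + ‖x₂‖) ^ (q - 1) * ‖x₁ - x₂‖)
    (hbij : ∀ t ∈ Set.Icc (0 : ℝ) T, Function.Bijective (fun x => x - δ • f t x)) :
    ∃ C₃ > 0, ∀ t ∈ Set.Icc (0 : ℝ) T, ∀ x : EuclideanSpace ℝ (Fin d),
      ‖Function.invFun (fun y => y - δ • f t y) x - x - δ • f t x‖ ≤
        δ ^ 2 * C₃ * (1 + ‖x‖ ^ (2 * q - 1)) := by
  have hκ : hbar * L < 1 := (lt_div_iff₀ hL).mp hhbar1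
  set K := (1 - hbar * L)⁻¹
  have hK : 0 ≤ K := inv_nonneg.mpr (by linarith)
  refine ⟨L ^ 2 * (2 + K) ^ (q - 1) * (1 + K) ^ q * 2 ^ (2 * q - 1 - 1), by positivity, ?_⟩
  intro t ht x
  obtain ⟨y, hxy⟩ := (hbij t ht).surjective x
  have hinv : Function.invFun (fun y => y - δ • f t y) x = y := by
    rw [← hxy]; exact Function.leftInverse_invFun (hbij t ht).injective y
  have hy : ‖y‖ ≤ K * (1 + ‖x‖) :=
    norm_le_inv_one_sub_mul_one_add_norm hδ.le (by simpa only [sub_zero] using hone t ht y 0)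
      (by simpa using hgrowth t ht 0) (mul_le_mul_of_nonneg_right hδbar hL.le) hκ hxy
  rw [hinv]
  calc _ ≤ δ ^ 2 * (L ^ 2 * (2 + K) ^ (q - 1) * (1 + K) ^ q) * (1 + ‖x‖) ^ (2 * q - 1) :=
        norm_sub_sub_smul_le_of_sub_smul_eq hδ.le hL.le (by linarith) hK (hgrowth t ht y)
          (hlip t ht y x) hy hxy
    _ ≤ δ ^ 2 * (L ^ 2 * (2 + K) ^ (q - 1) * (1 + K) ^ q) *
          (2 ^ (2 * q - 1 - 1) * (1 + ‖x‖ ^ (2 * q - 1))) := by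
        gcongr; exact one_add_rpow_le (norm_nonneg x) (by linarith)
    _ = _ := by ring

/-- Second-order estimate for the inverse:
`|F_δ⁻¹(t,x) - x - δ f(t,x)| ≤ δ² C₃ (1 + |x|^(2q-1))`. -/
theorem Finv_second_order {d : ℕ} (T L q hbar δ : ℝ) (hT : 0 < T) (hL : 0 < L) (hq : 2 ≤ q)
    (hhbar : 0 < hbar) (hhbar1 : hbar < 1 / L) (hδ : 0 < δ) (hδbar : δ ≤ hbar)
    (f : ℝ → EuclideanSpace ℝ (Fin d) → EuclideanSpace ℝ (Fin d))
    (hcont : ∀ t ∈ Set.Icc (0 : ℝ) T, Continuous (f t))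
    (hone : ∀ t ∈ Set.Icc (0 : ℝ) T, ∀ x₁ x₂,
      ⟪f t x₁ - f t x₂, x₁ - x₂⟫ ≤ L * ‖x₁ - x₂‖ ^ 2)
    (hgrowth : ∀ t ∈ Set.Icc (0 : ℝ) T, ∀ x, ‖f t x‖ ≤ L * (1 + ‖x‖) ^ q)
    (hlip : ∀ t ∈ Set.Icc (0 : ℝ) T, ∀ x₁ x₂,
      ‖f t x₁ - f t x₂‖ ≤ L * (1 + ‖x₁‖ + ‖x₂‖) ^ (q - 1) * ‖x₁ - x₂‖)
    (hbij : ∀ t ∈ Set.Icc (0 : ℝ) T, Function.Bijective (fun x => x - δ • f t x)) :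
    ∃ C₃ > 0, ∀ t ∈ Set.Icc (0 : ℝ) T, ∀ x : EuclideanSpace ℝ (Fin d),
      ‖Function.invFun (fun y => y - δ • f t y) x - x - δ • f t x‖ ≤
        δ ^ 2 * C₃ * (1 + ‖x‖ ^ (2 * q - 1)) :=
  Finv_second_order_general T L q hbar δ hL hq hhbar1 hδ hδbar f hone hgrowth hlip hbij
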